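/- arXiv:1310.4526 — 7 statements merged into one kernel-verified Lean document; each statement's English description precedes it below -/
import Mathlib

section
/- For θ₂ ∈ (0, 1/2), the equation t = tanh(2θ₂t) has the unique real root t = 0. -/
lemma sinh_le_mul_cosh {x : ℝ} (hx : 0 ≤ x) : Real.sinh x ≤ x * Real.cosh x := by
  have mono : MonotoneOn (fun y : ℝ => y * Real.cosh y - Real.sinh y) (Set.Ici 0) := by
    apply monotoneOn_of_deriv_nonneg (convex_Ici 0)
    · exact (Continuous.sub (continuous_id.mul Real.continuous_cosh)
        Real.continuous_sinh).continuousOn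
    · intro y hy
      exact (((hasDerivAt_id y).mul (Real.hasDerivAt_cosh y)).sub
        (Real.hasDerivAt_sinh y)).differentiableAt.differentiableWithinAt
    · intro y hy
      rw [interior_Ici] at hy
      have hd : HasDerivAt (fun y : ℝ => y * Real.cosh y - Real.sinh y)
          (1 * Real.cosh y + y * Real.sinh y - Real.cosh y) y :=
        ((hasDerivAt_id y).mul (Real.hasDerivAt_cosh y)).sub (Real.hasDerivAt_sinh y)
      rw [hd.deriv]
      have hy' : 0 < y := hy
      have : 0 ≤ y * Real.sinh y :=
        mul_nonneg hy'.le (Real.sinh_nonneg_iff.mpr hy'.le)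
      nlinarith
  have h0 : (0 : ℝ) ∈ Set.Ici (0 : ℝ) := Set.mem_Ici.mpr le_rfl
  have := mono h0 hx hx
  simp at this
  linarith

lemma abs_tanh_le (x : ℝ) : |Real.tanh x| ≤ |x| := by
  have key : ∀ y : ℝ, 0 ≤ y → Real.tanh y ≤ y := by
    intro y hy
    rw [Real.tanh_eq_sinh_div_cosh, div_le_iff₀ (Real.cosh_pos _)]
    exact sinh_le_mul_cosh hy
  have tanh_nonneg : ∀ y : ℝ, 0 ≤ y → 0 ≤ Real.tanh y := by
    intro y hy
    rw [Real.tanh_eq_sinh_div_cosh]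
    exact div_nonneg (Real.sinh_nonneg_iff.mpr hy) (Real.cosh_pos _).le
  rcases le_or_gt 0 x with hx | hx
  · rw [abs_of_nonneg hx, abs_of_nonneg (tanh_nonneg x hx)]
    exact key x hx
  · have h1 := key (-x) (by linarith)
    have h2 := tanh_nonneg (-x) (by linarith)
    rw [Real.tanh_neg] at h1 h2
    rw [abs_of_neg hx, abs_of_nonpos (by linarith : Real.tanh x ≤ 0)]
    linarith

theorem two_star_unique_root_subcritical (θ₂ : ℝ) (h1 : 0 < θ₂) (h2 : θ₂ < 1/2) :
    ∀ t : ℝ, t = Real.tanh (2 * θ₂ * t) ↔ t = 0 := by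
  intro t
  constructor
  · intro ht
    by_contra h0
    have habs : |t| ≤ |2 * θ₂ * t| := by
      have := abs_tanh_le (2 * θ₂ * t); rw [← ht] at this; exact this
    rw [abs_mul, abs_of_nonneg (by linarith : (0:ℝ) ≤ 2 * θ₂)] at habs
    have htpos : 0 < |t| := abs_pos.mpr h0
    nlinarith
  · intro ht; simp [ht, Real.tanh_eq_sinh_div_cosh]
end

section
/- For θ₂ > 1/2, the equation t = tanh(2θ₂t) has exactly three real roots: 0, m, and −m, where m > 0. -/
/-!
Put `c = 2θ₂ > 1` and `g t = tanh (c t) - t`, an odd function whose zeros are the roots.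
On `[0, ∞)` the derivative `c / cosh² (c t) - 1` is strictly decreasing, so `g` is strictly
concave there and, vanishing at `0`, has at most one positive zero. Such a zero exists by the
intermediate value theorem: `g' 0 = c - 1 > 0` makes `g` positive just right of `0`, while
`g 1 = tanh c - 1 < 0`. Oddness accounts for the negative root.
-/

open Real Set Filter Topology

theorem Real.hasDerivAt_tanh (x : ℝ) : HasDerivAt tanh (1 / cosh x ^ 2) x := by
  have h := (hasDerivAt_sinh x).div (hasDerivAt_cosh x) (cosh_pos x).ne'
  rw [← cosh_sq_sub_sinh_sq x, show tanh = sinh / cosh from funext tanh_eq_sinh_div_cosh]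
  exact h.congr_deriv (by ring)

theorem hasDerivAt_tanh_const_mul (c x : ℝ) :
    HasDerivAt (fun t => tanh (c * t)) (c / cosh (c * x) ^ 2) x :=
  ((hasDerivAt_tanh (c * x)).comp x ((hasDerivAt_id x).const_mul c)).congr_deriv (by ring)

theorem strictConcaveOn_tanh_const_mul {c : ℝ} (hc : 0 < c) :
    StrictConcaveOn ℝ (Ici 0) (fun t => tanh (c * t)) := by
  refine StrictAntiOn.strictConcaveOn_of_deriv (convex_Ici 0)
    (fun x _ => (hasDerivAt_tanh_const_mul c x).continuousAt.continuousWithinAt) ?_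
  rw [interior_Ici]
  intro x (hx : 0 < x) y (hy : 0 < y) hxy
  have hcosh : cosh (c * x) < cosh (c * y) := by
    rw [cosh_lt_cosh, abs_of_pos (by positivity), abs_of_pos (by positivity)]
    exact mul_lt_mul_of_pos_left hxy hc
  rw [(hasDerivAt_tanh_const_mul c x).deriv, (hasDerivAt_tanh_const_mul c y).deriv]
  gcongr

theorem StrictConcaveOn.eq_of_apply_eq {𝕜 : Type*} [Field 𝕜] [LinearOrder 𝕜]
    [IsStrictOrderedRing 𝕜] {s : Set 𝕜} {f : 𝕜 → 𝕜} (hf : StrictConcaveOn 𝕜 s f) {a x y : 𝕜} (ha : a ∈ s) (hx : x ∈ s) (hy : y ∈ s) (hxa : x ≠ a) (hya : y ≠ a)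
    (hfx : f x = f a) (hfy : f y = f a) : x = y := by
  by_contra hne
  rcases lt_or_gt_of_ne hne with hxy | hyx
  · simpa [hfx, hfy] using hf.secant_strict_mono ha hx hy hxa hya hxy
  · simpa [hfx, hfy] using hf.secant_strict_mono ha hy hx hya hxa hyx

theorem exists_mem_Ioo_eq_zero_of_hasDerivWithinAt_pos {f : ℝ → ℝ} {f' b : ℝ} (hb : 0 < b)
    (hf : ContinuousOn f (Icc 0 b)) (h0 : f 0 = 0) (hd : HasDerivWithinAt f f' (Ioi 0) 0)
    (hf' : 0 < f') (hfb : f b < 0) : ∃ m ∈ Ioo 0 b, f m = 0 := by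
  have hslope : Tendsto (slope f 0) (𝓝[>] 0) (𝓝 f') :=
    (hasDerivWithinAt_iff_tendsto_slope' self_notMem_Ioi).1 hd
  obtain ⟨t, ht_slope, ht_lt, ht_pos⟩ : ∃ t, 0 < slope f 0 t ∧ t < b ∧ 0 < t :=
    ((hslope.eventually (eventually_gt_nhds hf')).and
      ((eventually_nhdsWithin_of_eventually_nhds (eventually_lt_nhds hb)).and
        self_mem_nhdsWithin)).exists
  have hft : 0 < f t := by
    rw [slope_def_field, h0, sub_zero, sub_zero] at ht_slope
    exact (div_pos_iff_of_pos_right ht_pos).1 ht_slope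
  obtain ⟨m, hm, hfm⟩ := intermediate_value_Icc' ht_lt.le
    (hf.mono (Icc_subset_Icc_left ht_pos.le)) ⟨hfb.le, hft.le⟩
  refine ⟨m, ⟨ht_pos.trans_le hm.1, hm.2.lt_of_ne ?_⟩, hfm⟩
  rintro rfl
  exact hfb.ne hfm

theorem Function.Odd.setOf_eq_zero {g : ℝ → ℝ} (hg : g.Odd) {m : ℝ} (hm : 0 < m)
    (hpos : ∀ t, 0 < t → (g t = 0 ↔ t = m)) : {t | g t = 0} = {0, m, -m} := by
  ext t
  simp only [mem_ofPred_eq, mem_insert_iff, mem_singleton_iff]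
  rcases lt_trichotomy t 0 with ht | rfl | ht
  · have hneg : g t = 0 ↔ t = -m := by
      rw [← neg_eq_zero, ← hg, hpos (-t) (neg_pos.2 ht), neg_eq_iff_eq_neg]
    rw [hneg]
    exact ⟨fun h => .inr (.inr h), by rintro (h | h | h) <;> linarith⟩
  · simpa using hg.map_zero
  · rw [hpos t ht]
    exact ⟨fun h => .inr (.inl h), by rintro (h | h | h) <;> linarith⟩

theorem two_star_three_roots_supercritical (θ₂ : ℝ) (h : 1/2 < θ₂) :
    ∃ m : ℝ, 0 < m ∧ {t : ℝ | t = Real.tanh (2 * θ₂ * t)} = {0, m, -m} := by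
  set c := 2 * θ₂
  have hc : 1 < c := by linarith
  set g : ℝ → ℝ := fun t => tanh (c * t) - t
  have hg_deriv (x : ℝ) : HasDerivAt g (c / cosh (c * x) ^ 2 - 1) x :=
    (hasDerivAt_tanh_const_mul c x).sub (hasDerivAt_id x)
  have hg_conc : StrictConcaveOn ℝ (Ici 0) g :=
    (strictConcaveOn_tanh_const_mul (by linarith)).sub_convexOn (convexOn_id (convex_Ici 0))
  have hg_odd : g.Odd := fun t => by simp only [g, mul_neg, tanh_neg]; ring
  have hg0 : g 0 = 0 := hg_odd.map_zero
  obtain ⟨m, hm, hgm⟩ := exists_mem_Ioo_eq_zero_of_hasDerivWithinAt_pos one_pos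
    (fun x _ => (hg_deriv x).continuousAt.continuousWithinAt) hg0
    (hg_deriv 0).hasDerivWithinAt (by simpa using hc) (by simpa [g] using tanh_lt_one c)
  have hroots : {t | t = tanh (c * t)} = {t | g t = 0} := by
    ext t
    exact eq_comm.trans sub_eq_zero.symm
  refine ⟨m, hm.1, hroots.trans (hg_odd.setOf_eq_zero hm.1 fun t ht => ⟨fun hgt => ?_, ?_⟩)⟩
  · exact hg_conc.eq_of_apply_eq self_mem_Ici ht.le hm.1.le ht.ne' hm.1.ne' (hgt.trans hg0.symm)
      (hgm.trans hg0.symm)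
  · rintro rfl
    exact hgm
end

section
/- Let h_n, g_n be strictly positive integrable functions on σ-finite measure spaces (Ω_n, F_n, μ_n), with induced probability measures H_n and G_n (obtained by normalizing). If the log-likelihood ratio L_n := log(h_n/g_n) is tight (O_p(1)) under both H_n and G_n, then the sequences (H_n) and (G_n) are mutually contiguous: for any measurable sets A_n, G_n(A_n) → 0 implies H_n(A_n) → 0, and vice versa. -/
open MeasureTheory Filter

lemma key_ineq {Ω : Type*} [MeasurableSpace Ω] (μ : Measure Ω)
    (h g : Ω → ℝ) (hpos : ∀ x, 0 < h x) (gpos : ∀ x, 0 < g x)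
    (hmeas : Measurable h) (gmeas : Measurable g)
    (hint : Integrable h μ) (gint : Integrable g μ)
    (A : Set Ω) (hA : MeasurableSet A) (M : ℝ) :
    ∫ x in A, h x ∂μ ≤ Real.exp M * ∫ x in A, g x ∂μ +
      ∫ x in {x | M < |Real.log (h x / g x)|}, h x ∂μ := by
  set T : Set Ω := {x | M < |Real.log (h x / g x)|} with hT
  have hTmeas : MeasurableSet T :=
    measurableSet_lt measurable_const ((Real.measurable_log.comp (hmeas.div gmeas)).abs)
  have hsplit : (∫ x in A ∩ T, h x ∂μ) + ∫ x in A \ T, h x ∂μ = ∫ x in A, h x ∂μ :=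
    integral_inter_add_diff hTmeas hint.integrableOn
  have h1 : ∫ x in A \ T, h x ∂μ ≤ ∫ x in A \ T, Real.exp M * g x ∂μ := by
    refine setIntegral_mono_on hint.integrableOn (gint.integrableOn.const_mul _)
      (hA.diff hTmeas) ?_
    intro x hx
    have hxT : ¬ (M < |Real.log (h x / g x)|) := hx.2
    have hlog : Real.log (h x / g x) ≤ M := (le_abs_self _).trans (not_lt.mp hxT)
    have hdiv : h x / g x ≤ Real.exp M :=
      (Real.log_le_iff_le_exp (div_pos (hpos x) (gpos x))).mp hlog
    exact (div_le_iff₀ (gpos x)).mp hdiv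
  have h2 : ∫ x in A \ T, Real.exp M * g x ∂μ = Real.exp M * ∫ x in A \ T, g x ∂μ :=
    integral_const_mul _ _
  have h3 : ∫ x in A \ T, g x ∂μ ≤ ∫ x in A, g x ∂μ := by
    refine setIntegral_mono_set gint.integrableOn ?_ ?_
    · exact Eventually.of_forall fun x => (gpos x).le
    · exact HasSubset.Subset.eventuallyLE Set.diff_subset
  have h4 : ∫ x in A ∩ T, h x ∂μ ≤ ∫ x in T, h x ∂μ := by
    refine setIntegral_mono_set hint.integrableOn ?_ ?_
    · exact Eventually.of_forall fun x => (hpos x).le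
    · exact HasSubset.Subset.eventuallyLE Set.inter_subset_right
  have := add_le_add h4 (h1.trans (h2.le.trans (by
    exact mul_le_mul_of_nonneg_left h3 (Real.exp_pos M).le)))
  linarith [hsplit]

/-- One direction of contiguity: if G_n(A_n) → 0 then H_n(A_n) → 0. -/
lemma contig_one
    (Ω : ℕ → Type*) [∀ n, MeasurableSpace (Ω n)] (μ : ∀ n, Measure (Ω n))
    (h g : ∀ n, Ω n → ℝ)
    (hpos : ∀ n x, 0 < h n x) (gpos : ∀ n x, 0 < g n x)
    (hmeas : ∀ n, Measurable (h n)) (gmeas : ∀ n, Measurable (g n))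
    (hint : ∀ n, Integrable (h n) (μ n)) (gint : ∀ n, Integrable (g n) (μ n))
    (a b : ℕ → ℝ)
    (ha : ∀ n, a n = ∫ x, h n x ∂(μ n)) (hb : ∀ n, b n = ∫ x, g n x ∂(μ n))
    (hapos : ∀ n, 0 < a n) (hbpos : ∀ n, 0 < b n)
    (htightH : ∀ ε : ℝ, 0 < ε → ∃ M : ℝ, ∀ n,
      (∫ x in {x | M < |Real.log (h n x / g n x)|}, h n x ∂(μ n)) / a n ≤ ε)
    (htightG : ∀ ε : ℝ, 0 < ε → ∃ M : ℝ, ∀ n,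
      (∫ x in {x | M < |Real.log (h n x / g n x)|}, g n x ∂(μ n)) / b n ≤ ε)
    (A : (n : ℕ) → Set (Ω n)) (hAmeas : ∀ n, MeasurableSet (A n))
    (hG : Tendsto (fun n => (∫ x in A n, g n x ∂(μ n)) / b n) atTop (nhds 0)) :
    Tendsto (fun n => (∫ x in A n, h n x ∂(μ n)) / a n) atTop (nhds 0) := by
  have hHnonneg : ∀ n, 0 ≤ (∫ x in A n, h n x ∂(μ n)) / a n := fun n =>
    div_nonneg (setIntegral_nonneg (hAmeas n) fun x _ => (hpos n x).le) (hapos n).le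
  have hGnonneg : ∀ n, 0 ≤ (∫ x in A n, g n x ∂(μ n)) / b n := fun n =>
    div_nonneg (setIntegral_nonneg (hAmeas n) fun x _ => (gpos n x).le) (hbpos n).le
  -- get the bound b n ≤ 2 * exp M' * a n from tightness of G
  obtain ⟨M', hM'⟩ := htightG (1/2) (by norm_num)
  have hba : ∀ n, b n ≤ 2 * Real.exp M' * a n := by
    intro n
    have hset : {x | M' < |Real.log (g n x / h n x)|}
        = {x | M' < |Real.log (h n x / g n x)|} := by
      ext x
      simp only [Set.mem_setOf_eq, Real.log_div (ne_of_gt (gpos n x)) (ne_of_gt (hpos n x)),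
        Real.log_div (ne_of_gt (hpos n x)) (ne_of_gt (gpos n x)), abs_sub_comm]
    have := key_ineq (μ n) (g n) (h n) (gpos n) (hpos n) (gmeas n) (hmeas n)
      (gint n) (hint n) Set.univ MeasurableSet.univ M'
    rw [hset, setIntegral_univ, setIntegral_univ] at this
    have htail : (∫ x in {x | M' < |Real.log (h n x / g n x)|}, g n x ∂(μ n)) ≤ b n / 2 := by
      have := hM' n
      have hb2 := hbpos n
      rw [div_le_iff₀ hb2] at this
      linarith
    have : b n ≤ Real.exp M' * a n + b n / 2 := by
      rw [hb n, ha n]; rw [hb n] at htail; linarith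
    have he := (Real.exp_pos M').le
    linarith
  -- ε-argument
  rw [Metric.tendsto_atTop] at hG ⊢
  intro ε hε
  obtain ⟨M, hM⟩ := htightH (ε/4) (by linarith)
  set C : ℝ := 2 * Real.exp (M + M') with hC
  have hCpos : 0 < C := by positivity
  obtain ⟨N, hN⟩ := hG (ε / (4 * C)) (by positivity)
  refine ⟨N, fun n hn => ?_⟩
  have hGsmall : (∫ x in A n, g n x ∂(μ n)) / b n < ε / (4 * C) := by
    have := hN n hn
    rwa [Real.dist_eq, sub_zero, abs_of_nonneg (hGnonneg n)] at this
  have hkey := key_ineq (μ n) (h n) (g n) (hpos n) (gpos n) (hmeas n) (gmeas n)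
    (hint n) (gint n) (A n) (hAmeas n) M
  have htail : (∫ x in {x | M < |Real.log (h n x / g n x)|}, h n x ∂(μ n)) ≤ ε/4 * a n := by
    have := hM n
    rw [div_le_iff₀ (hapos n)] at this
    linarith
  have h5 : Real.exp M * (∫ x in A n, g n x ∂(μ n))
      < Real.exp M * (ε / (4*C) * b n) := by
    have hGb : (∫ x in A n, g n x ∂(μ n)) < ε / (4*C) * b n :=
      (div_lt_iff₀ (hbpos n)).mp hGsmall
    exact mul_lt_mul_of_pos_left hGb (Real.exp_pos M)
  have h6 : Real.exp M * (ε / (4*C) * b n)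
      ≤ Real.exp M * (ε / (4*C) * (2 * Real.exp M' * a n)) := by
    refine mul_le_mul_of_nonneg_left ?_ (Real.exp_pos M).le
    exact mul_le_mul_of_nonneg_left (hba n) (by positivity)
  have h7 : Real.exp M * (ε / (4*C) * (2 * Real.exp M' * a n)) = ε/4 * a n := by
    rw [hC, Real.exp_add]
    have e1 := (Real.exp_pos M).ne'
    have e2 := (Real.exp_pos M').ne'
    field_simp
  rw [Real.dist_eq, sub_zero, abs_of_nonneg (hHnonneg n), div_lt_iff₀ (hapos n)]
  nlinarith [mul_pos hε (hapos n), hkey, htail, h5, h6, h7]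

theorem mutual_contiguity
    (Ω : ℕ → Type*) [∀ n, MeasurableSpace (Ω n)] (μ : ∀ n, Measure (Ω n))
    [∀ n, SigmaFinite (μ n)]
    (h g : ∀ n, Ω n → ℝ)
    (hpos : ∀ n x, 0 < h n x) (gpos : ∀ n x, 0 < g n x)
    (hmeas : ∀ n, Measurable (h n)) (gmeas : ∀ n, Measurable (g n))
    (hint : ∀ n, Integrable (h n) (μ n)) (gint : ∀ n, Integrable (g n) (μ n))
    (a b : ℕ → ℝ)
    (ha : ∀ n, a n = ∫ x, h n x ∂(μ n)) (hb : ∀ n, b n = ∫ x, g n x ∂(μ n))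
    (hapos : ∀ n, 0 < a n) (hbpos : ∀ n, 0 < b n)
    (htightH : ∀ ε : ℝ, 0 < ε → ∃ M : ℝ, ∀ n,
      (∫ x in {x | M < |Real.log (h n x / g n x)|}, h n x ∂(μ n)) / a n ≤ ε)
    (htightG : ∀ ε : ℝ, 0 < ε → ∃ M : ℝ, ∀ n,
      (∫ x in {x | M < |Real.log (h n x / g n x)|}, g n x ∂(μ n)) / b n ≤ ε) :
    ∀ A : (n : ℕ) → Set (Ω n), (∀ n, MeasurableSet (A n)) →
      ((Tendsto (fun n => (∫ x in A n, g n x ∂(μ n)) / b n) atTop (nhds 0) →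
        Tendsto (fun n => (∫ x in A n, h n x ∂(μ n)) / a n) atTop (nhds 0)) ∧
       (Tendsto (fun n => (∫ x in A n, h n x ∂(μ n)) / a n) atTop (nhds 0) →
        Tendsto (fun n => (∫ x in A n, g n x ∂(μ n)) / b n) atTop (nhds 0))) := by
  intro A hAmeas
  have hset : ∀ n (M : ℝ), {x | M < |Real.log (g n x / h n x)|}
      = {x | M < |Real.log (h n x / g n x)|} := by
    intro n M
    ext x
    simp only [Set.mem_setOf_eq, Real.log_div (ne_of_gt (gpos n x)) (ne_of_gt (hpos n x)),
      Real.log_div (ne_of_gt (hpos n x)) (ne_of_gt (gpos n x)), abs_sub_comm]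
  constructor
  · exact contig_one Ω μ h g hpos gpos hmeas gmeas hint gint a b ha hb hapos hbpos
      htightH htightG A hAmeas
  · refine contig_one Ω μ g h gpos hpos gmeas hmeas gint hint b a hb ha hbpos hapos
      ?_ ?_ A hAmeas
    · intro ε hε
      obtain ⟨M, hM⟩ := htightG ε hε
      exact ⟨M, fun n => by rw [hset n M]; exact hM n⟩
    · intro ε hε
      obtain ⟨M, hM⟩ := htightH ε hε
      exact ⟨M, fun n => by rw [hset n M]; exact hM n⟩
end

section
/- In the setting of mutually contiguous H_n, G_n as above: if the log-likelihood ratio L_n converges in distribution under G_n to a constant c ∈ ℝ, then a_n/b_n → e^c, and the total variation distance ‖H_n − G_n‖_TV tends to 0. -/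
open MeasureTheory Filter

section Aux
variable {Ω : Type*} [MeasurableSpace Ω] {μ : Measure Ω} {h g : Ω → ℝ}

/-- Lower bound: if `K * g ≤ h` off `S`, then `K * (∫ g - ∫_S g) ≤ ∫ h`. -/
lemma intLow (hint : Integrable h μ) (gint : Integrable g μ)
    (hnn : ∀ x, 0 ≤ h x)
    {S : Set Ω} (hS : MeasurableSet S) {K : ℝ} (hK : 0 ≤ K)
    (hbound : ∀ x ∉ S, K * g x ≤ h x) :
    K * ((∫ x, g x ∂μ) - ∫ x in S, g x ∂μ) ≤ ∫ x, h x ∂μ := by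
  have h1 : (∫ x, g x ∂μ) - ∫ x in S, g x ∂μ = ∫ x in Sᶜ, g x ∂μ := by
    rw [← integral_add_compl hS gint]; ring
  rw [h1, ← integral_const_mul]
  calc ∫ x in Sᶜ, K * g x ∂μ ≤ ∫ x in Sᶜ, h x ∂μ := by
        refine setIntegral_mono_on ((gint.const_mul K).integrableOn) hint.integrableOn
          hS.compl (fun x hx => hbound x hx)
    _ ≤ ∫ x, h x ∂μ :=
        setIntegral_le_integral hint (Filter.Eventually.of_forall hnn)

/-- Upper bound: if `h ≤ K * g` off `S`, then `∫ h ≤ K * ∫ g + ∫_S h`. -/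
lemma intUp (hint : Integrable h μ) (gint : Integrable g μ)
    (gnn : ∀ x, 0 ≤ g x)
    {S : Set Ω} (hS : MeasurableSet S) {K : ℝ} (hK : 0 ≤ K)
    (hbound : ∀ x ∉ S, h x ≤ K * g x) :
    ∫ x, h x ∂μ ≤ K * (∫ x, g x ∂μ) + ∫ x in S, h x ∂μ := by
  have h1 : (∫ x, h x ∂μ) = (∫ x in Sᶜ, h x ∂μ) + ∫ x in S, h x ∂μ := by
    rw [← integral_add_compl hS hint]; ring
  rw [h1]
  have h2 : ∫ x in Sᶜ, h x ∂μ ≤ K * ∫ x, g x ∂μ := by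
    calc ∫ x in Sᶜ, h x ∂μ ≤ ∫ x in Sᶜ, K * g x ∂μ :=
          setIntegral_mono_on hint.integrableOn ((gint.const_mul K).integrableOn)
            hS.compl (fun x hx => hbound x hx)
      _ = K * ∫ x in Sᶜ, g x ∂μ := integral_const_mul K _
      _ ≤ K * ∫ x, g x ∂μ := by
          refine mul_le_mul_of_nonneg_left
            (setIntegral_le_integral gint (Filter.Eventually.of_forall gnn)) hK
  linarith

/-- `∫_B h ≤ K * ∫_B g + ∫_T h` when `h ≤ K g` on `B \ T`. -/
lemma intBadUp (hint : Integrable h μ) (gint : Integrable g μ)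
    (hnn : ∀ x, 0 ≤ h x) (gnn : ∀ x, 0 ≤ g x)
    {B T : Set Ω} (hB : MeasurableSet B) (hT : MeasurableSet T) {K : ℝ} (hK : 0 ≤ K)
    (hbound : ∀ x ∈ B, x ∉ T → h x ≤ K * g x) :
    ∫ x in B, h x ∂μ ≤ K * (∫ x in B, g x ∂μ) + ∫ x in T, h x ∂μ := by
  have h1 : (∫ x in B ∩ Tᶜ, h x ∂μ) + ∫ x in B \ Tᶜ, h x ∂μ = ∫ x in B, h x ∂μ :=
    integral_inter_add_diff hT.compl hint.integrableOn
  have h2 : ∫ x in B ∩ Tᶜ, h x ∂μ ≤ K * ∫ x in B, g x ∂μ := by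
    calc ∫ x in B ∩ Tᶜ, h x ∂μ ≤ ∫ x in B ∩ Tᶜ, K * g x ∂μ :=
          setIntegral_mono_on hint.integrableOn ((gint.const_mul K).integrableOn)
            (hB.inter hT.compl) (fun x hx => hbound x hx.1 hx.2)
      _ = K * ∫ x in B ∩ Tᶜ, g x ∂μ := integral_const_mul K _
      _ ≤ K * ∫ x in B, g x ∂μ := by
          refine mul_le_mul_of_nonneg_left ?_ hK
          refine setIntegral_mono_set gint.integrableOn
            (Filter.Eventually.of_forall gnn) (HasSubset.Subset.eventuallyLE Set.inter_subset_left)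
  have h3 : ∫ x in B \ Tᶜ, h x ∂μ ≤ ∫ x in T, h x ∂μ := by
    refine setIntegral_mono_set hint.integrableOn
      (Filter.Eventually.of_forall hnn) (HasSubset.Subset.eventuallyLE ?_)
    intro x hx; simpa using hx.2
  linarith

lemma tvArith {P P' Q Q' a b IhS IgS Kp Km : ℝ}
    (hapos : 0 < a) (hbpos : 0 < b)
    (h1 : Km * P' ≤ P) (h2 : P ≤ Kp * P')
    (h3 : 0 ≤ Q) (h4 : Q ≤ IhS) (h5 : 0 ≤ Q') (h6 : Q' ≤ IgS)
    (h7 : 0 ≤ P') (h8 : P' ≤ b) :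
    |(P + Q) / a - (P' + Q') / b| ≤
      |Kp * (b / a) - 1| + |Km * (b / a) - 1| + IhS / a + IgS / b := by
  have hb1 : (0:ℝ) ≤ P' / b := div_nonneg h7 hbpos.le
  have hb2 : P' / b ≤ 1 := (div_le_one hbpos).mpr h8
  have key : ∀ t : ℝ, (P' / b) * t ≤ |t| := by
    intro t
    calc (P' / b) * t ≤ (P' / b) * |t| := mul_le_mul_of_nonneg_left (le_abs_self t) hb1
      _ ≤ 1 * |t| := mul_le_mul_of_nonneg_right hb2 (abs_nonneg t)
      _ = |t| := one_mul _
  have e1 : P / a - P' / b ≤ |Kp * (b / a) - 1| := by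
    have : P / a - P' / b ≤ (P' / b) * (Kp * (b / a) - 1) := by
      have : P / a ≤ Kp * P' / a := div_le_div_of_nonneg_right h2 hapos.le |>.trans_eq rfl
      have heq : (P' / b) * (Kp * (b / a) - 1) = Kp * P' / a - P' / b := by
        field_simp
      linarith [this, heq]
    exact this.trans (key _)
  have e2 : P' / b - P / a ≤ |Km * (b / a) - 1| := by
    have : P' / b - P / a ≤ (P' / b) * (1 - Km * (b / a)) := by
      have : Km * P' / a ≤ P / a := div_le_div_of_nonneg_right h1 hapos.le |>.trans_eq rfl
      have heq : (P' / b) * (1 - Km * (b / a)) = P' / b - Km * P' / a := by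
        field_simp
      linarith [this, heq]
    refine this.trans ?_
    rw [← abs_sub_comm]
    exact key _
  have f1 : Q / a ≤ IhS / a := div_le_div_of_nonneg_right h4 hapos.le |>.trans_eq rfl
  have f2 : Q' / b ≤ IgS / b := div_le_div_of_nonneg_right h6 hbpos.le |>.trans_eq rfl
  have f3 : 0 ≤ Q / a := div_nonneg h3 hapos.le
  have f4 : 0 ≤ Q' / b := div_nonneg h5 hbpos.le
  rw [add_div, add_div, abs_le]
  constructor <;> nlinarith [abs_nonneg (Kp * (b / a) - 1), abs_nonneg (Km * (b / a) - 1)]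

end Aux

theorem contiguity_tv_convergence
    (Ω : ℕ → Type*) [∀ n, MeasurableSpace (Ω n)] (μ : ∀ n, Measure (Ω n))
    [∀ n, SigmaFinite (μ n)]
    (h g : ∀ n, Ω n → ℝ)
    (hpos : ∀ n x, 0 < h n x) (gpos : ∀ n x, 0 < g n x)
    (hmeas : ∀ n, Measurable (h n)) (gmeas : ∀ n, Measurable (g n))
    (hint : ∀ n, Integrable (h n) (μ n)) (gint : ∀ n, Integrable (g n) (μ n))
    (a b : ℕ → ℝ)
    (ha : ∀ n, a n = ∫ x, h n x ∂(μ n)) (hb : ∀ n, b n = ∫ x, g n x ∂(μ n))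
    (hapos : ∀ n, 0 < a n) (hbpos : ∀ n, 0 < b n)
    (htightH : ∀ ε : ℝ, 0 < ε → ∃ M : ℝ, ∀ n,
      (∫ x in {x | M < |Real.log (h n x / g n x)|}, h n x ∂(μ n)) / a n ≤ ε)
    (htightG : ∀ ε : ℝ, 0 < ε → ∃ M : ℝ, ∀ n,
      (∫ x in {x | M < |Real.log (h n x / g n x)|}, g n x ∂(μ n)) / b n ≤ ε)
    (c : ℝ)
    (hconv : ∀ ε : ℝ, 0 < ε →
      Tendsto (fun n =>
        (∫ x in {x | ε < |Real.log (h n x / g n x) - c|}, g n x ∂(μ n)) / b n)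
        atTop (nhds 0)) :
    Tendsto (fun n => a n / b n) atTop (nhds (Real.exp c)) ∧
    (∀ ε : ℝ, 0 < ε → ∃ N : ℕ, ∀ n ≥ N, ∀ A : Set (Ω n), MeasurableSet A →
      |(∫ x in A, h n x ∂(μ n)) / a n - (∫ x in A, g n x ∂(μ n)) / b n| ≤ ε) := by
  -- basic measurability / positivity facts
  have Lmeas : ∀ n, Measurable fun x => Real.log (h n x / g n x) :=
    fun n => ((hmeas n).div (gmeas n)).log
  have Tmeas : ∀ (n : ℕ) (M : ℝ),
      MeasurableSet {x | M < |Real.log (h n x / g n x)|} :=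
    fun n M => measurableSet_lt measurable_const (Lmeas n).abs
  have Smeas : ∀ (n : ℕ) (t : ℝ),
      MeasurableSet {x | t < |Real.log (h n x / g n x) - c|} :=
    fun n t => measurableSet_lt measurable_const ((Lmeas n).sub measurable_const).abs
  have hnn : ∀ n x, 0 ≤ h n x := fun n x => (hpos n x).le
  have gnn : ∀ n x, 0 ≤ g n x := fun n x => (gpos n x).le
  have hgid : ∀ n x, h n x = Real.exp (Real.log (h n x / g n x)) * g n x := by
    intro n x
    rw [Real.exp_log (div_pos (hpos n x) (gpos n x)), div_mul_cancel₀ _ (gpos n x).ne']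
  have boundUp : ∀ (n : ℕ) (d t : ℝ) (x : Ω n),
      |Real.log (h n x / g n x) - d| ≤ t → h n x ≤ Real.exp (d + t) * g n x := by
    intro n d t x hx
    rw [hgid n x]
    refine mul_le_mul_of_nonneg_right (Real.exp_le_exp.mpr ?_) (gnn n x)
    have := abs_le.mp hx
    linarith [this.2]
  have boundLow : ∀ (n : ℕ) (d t : ℝ) (x : Ω n),
      |Real.log (h n x / g n x) - d| ≤ t → Real.exp (d - t) * g n x ≤ h n x := by
    intro n d t x hx
    conv_rhs => rw [hgid n x]
    refine mul_le_mul_of_nonneg_right (Real.exp_le_exp.mpr ?_) (gnn n x)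
    have := abs_le.mp hx
    linarith [this.1]
  have boundLow2 : ∀ (n : ℕ) (M : ℝ) (x : Ω n),
      |Real.log (h n x / g n x)| ≤ M → Real.exp (-M) * h n x ≤ g n x := by
    intro n M x hx
    have h1 := boundUp n 0 M x (by simpa using hx)
    have h2 : Real.exp (-M) * Real.exp (0 + M) = 1 := by
      rw [← Real.exp_add]; norm_num
    calc Real.exp (-M) * h n x
        ≤ Real.exp (-M) * (Real.exp (0 + M) * g n x) :=
          mul_le_mul_of_nonneg_left h1 (Real.exp_pos (-M)).le
      _ = g n x := by rw [← mul_assoc, h2, one_mul]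
  -- Step 0: uniform ratio bounds
  obtain ⟨M₀, hM₀⟩ := htightG (1/2) (by norm_num)
  set C₀ : ℝ := 2 * Real.exp M₀ with hC₀def
  have hC₀pos : 0 < C₀ := by positivity
  have hba : ∀ n, b n ≤ C₀ * a n := by
    intro n
    have key := intLow (hint n) (gint n) (hnn n) (Tmeas n M₀)
      (Real.exp_pos (0 - M₀)).le
      (K := Real.exp (0 - M₀))
      (fun x hx => by
        refine boundLow n 0 M₀ x ?_
        simpa using not_lt.mp hx)
    rw [← ha n, ← hb n] at key
    have h2 : (∫ x in {x | M₀ < |Real.log (h n x / g n x)|}, g n x ∂(μ n)) ≤ 1/2 * b n :=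
      (div_le_iff₀ (hbpos n)).mp (hM₀ n)
    have h3 : Real.exp (0 - M₀) * Real.exp M₀ = 1 := by
      rw [← Real.exp_add]; norm_num
    set I := ∫ x in {x | M₀ < |Real.log (h n x / g n x)|}, g n x ∂(μ n) with hIdef
    have key2 : b n - I ≤ Real.exp M₀ * a n := by
      have h4 := mul_le_mul_of_nonneg_left key (Real.exp_pos M₀).le
      calc b n - I = Real.exp M₀ * (Real.exp (0 - M₀) * (b n - I)) := by
            rw [← mul_assoc, mul_comm (Real.exp M₀), h3, one_mul]
        _ ≤ Real.exp M₀ * a n := h4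
    rw [hC₀def]
    nlinarith [hbpos n]
  obtain ⟨M₁, hM₁⟩ := htightH (1/2) (by norm_num)
  set C₁ : ℝ := 2 * Real.exp M₁ with hC₁def
  have hC₁pos : 0 < C₁ := by positivity
  have hab : ∀ n, a n ≤ C₁ * b n := by
    intro n
    have key := intLow (gint n) (hint n) (gnn n) (Tmeas n M₁)
      (Real.exp_pos (-M₁)).le
      (K := Real.exp (-M₁))
      (fun x hx => boundLow2 n M₁ x (not_lt.mp hx))
    rw [← ha n, ← hb n] at key
    have h2 : (∫ x in {x | M₁ < |Real.log (h n x / g n x)|}, h n x ∂(μ n)) ≤ 1/2 * a n :=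
      (div_le_iff₀ (hapos n)).mp (hM₁ n)
    have h3 : Real.exp (-M₁) * Real.exp M₁ = 1 := by
      rw [← Real.exp_add]; norm_num
    set I := ∫ x in {x | M₁ < |Real.log (h n x / g n x)|}, h n x ∂(μ n) with hIdef
    have key2 : a n - I ≤ Real.exp M₁ * b n := by
      have h4 := mul_le_mul_of_nonneg_left key (Real.exp_pos M₁).le
      calc a n - I = Real.exp M₁ * (Real.exp (-M₁) * (a n - I)) := by
            rw [← mul_assoc, mul_comm (Real.exp M₁), h3, one_mul]
        _ ≤ Real.exp M₁ * b n := h4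
    rw [hC₁def]
    nlinarith [hapos n]
  -- nonnegativity of the bad-set integrals
  have Ihnn : ∀ (n : ℕ) (S : Set (Ω n)), 0 ≤ ∫ x in S, h n x ∂(μ n) :=
    fun n S => integral_nonneg (fun x => hnn n x)
  have Ignn : ∀ (n : ℕ) (S : Set (Ω n)), 0 ≤ ∫ x in S, g n x ∂(μ n) :=
    fun n S => integral_nonneg (fun x => gnn n x)
  -- Step: the H-mass of the bad set tends to 0
  have Hbad0 : ∀ t : ℝ, 0 < t → ∀ δ : ℝ, 0 < δ → ∀ᶠ n in atTop,
      (∫ x in {x | t < |Real.log (h n x / g n x) - c|}, h n x ∂(μ n)) / a n ≤ δ := by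
    intro t ht δ hδ
    obtain ⟨M, hM⟩ := htightH (δ/2) (by linarith)
    have hevent : ∀ᶠ n in atTop,
        (∫ x in {x | t < |Real.log (h n x / g n x) - c|}, g n x ∂(μ n)) / b n
          < δ / (2 * (Real.exp M * C₀)) :=
      (hconv t ht).eventually_lt_const (by positivity)
    filter_upwards [hevent] with n hn
    have key := intBadUp (hint n) (gint n) (hnn n) (gnn n) (Smeas n t) (Tmeas n M)
      (K := Real.exp (0 + M)) (Real.exp_pos _).le
      (fun x _ hx => boundUp n 0 M x (by simpa using not_lt.mp hx))
    simp only [zero_add] at key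
    have d1 : (∫ x in {x | M < |Real.log (h n x / g n x)|}, h n x ∂(μ n)) ≤ δ/2 * a n :=
      (div_le_iff₀ (hapos n)).mp (hM n)
    have d2 : (∫ x in {x | t < |Real.log (h n x / g n x) - c|}, g n x ∂(μ n))
        ≤ δ / (2 * (Real.exp M * C₀)) * b n :=
      ((div_lt_iff₀ (hbpos n)).mp hn).le
    have mono : Real.exp M * (∫ x in {x | t < |Real.log (h n x / g n x) - c|}, g n x ∂(μ n))
        ≤ Real.exp M * (δ / (2 * (Real.exp M * C₀)) * (C₀ * a n)) := by
      refine mul_le_mul_of_nonneg_left ?_ (Real.exp_pos M).le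
      calc (∫ x in {x | t < |Real.log (h n x / g n x) - c|}, g n x ∂(μ n))
          ≤ δ / (2 * (Real.exp M * C₀)) * b n := d2
        _ ≤ δ / (2 * (Real.exp M * C₀)) * (C₀ * a n) :=
            mul_le_mul_of_nonneg_left (hba n) (by positivity)
    have eq1 : Real.exp M * (δ / (2 * (Real.exp M * C₀)) * (C₀ * a n)) = δ/2 * a n := by
      have h1 : Real.exp M ≠ 0 := (Real.exp_pos M).ne'
      have h2 : C₀ ≠ 0 := hC₀pos.ne'
      field_simp
    rw [div_le_iff₀ (hapos n)]
    linarith [key, d1, mono, eq1]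
  -- Part 1: a n / b n → exp c
  have part1 : Tendsto (fun n => a n / b n) atTop (nhds (Real.exp c)) := by
    rw [Metric.tendsto_atTop]
    intro δ hδ
    obtain ⟨r, hr, hball⟩ := Metric.continuousAt_iff.mp
      (Real.continuous_exp.continuousAt (x := c)) (δ/4) (by linarith)
    set t := r/2 with htdef
    have htpos : 0 < t := by positivity
    have hup : Real.exp (c + t) < Real.exp c + δ/4 := by
      have hd : dist (c + t) c < r := by
        rw [Real.dist_eq]
        rw [abs_of_pos (by linarith : (0:ℝ) < c + t - c)]
        simp only [htdef]; linarith
      have := hball hd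
      rw [Real.dist_eq] at this
      linarith [abs_lt.mp this |>.2]
    have hlo : Real.exp c - δ/4 < Real.exp (c - t) := by
      have hd : dist (c - t) c < r := by
        rw [Real.dist_eq]
        rw [abs_of_neg (by linarith : c - t - c < 0)]
        simp only [htdef]; linarith
      have := hball hd
      rw [Real.dist_eq] at this
      linarith [abs_lt.mp this |>.1]
    have hloc : Real.exp (c - t) ≤ Real.exp c := Real.exp_le_exp.mpr (by linarith)
    have ev1 := Hbad0 t htpos (δ/(4*C₁)) (by positivity)
    have ev2 : ∀ᶠ n in atTop,
        (∫ x in {x | t < |Real.log (h n x / g n x) - c|}, g n x ∂(μ n)) / b n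
          < δ / (4 * Real.exp c) :=
      (hconv t htpos).eventually_lt_const (by positivity)
    obtain ⟨N, hN⟩ := eventually_atTop.mp (ev1.and ev2)
    refine ⟨N, fun n hn => ?_⟩
    obtain ⟨hH, hG⟩ := hN n hn
    have dH : (∫ x in {x | t < |Real.log (h n x / g n x) - c|}, h n x ∂(μ n))
        ≤ δ/(4*C₁) * a n := (div_le_iff₀ (hapos n)).mp hH
    have dG : (∫ x in {x | t < |Real.log (h n x / g n x) - c|}, g n x ∂(μ n))
        ≤ δ/(4*Real.exp c) * b n := ((div_lt_iff₀ (hbpos n)).mp hG).le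
    have keyUp := intUp (hint n) (gint n) (gnn n) (Smeas n t)
      (K := Real.exp (c + t)) (Real.exp_pos _).le
      (fun x hx => boundUp n c t x (not_lt.mp hx))
    rw [← ha n, ← hb n] at keyUp
    have keyLo := intLow (hint n) (gint n) (hnn n) (Smeas n t)
      (K := Real.exp (c - t)) (Real.exp_pos _).le
      (fun x hx => boundLow n c t x (not_lt.mp hx))
    rw [← ha n, ← hb n] at keyLo
    have upfin : a n / b n ≤ Real.exp c + δ/2 := by
      rw [div_le_iff₀ (hbpos n)]
      have e1 : δ/(4*C₁) * a n ≤ δ/(4*C₁) * (C₁ * b n) :=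
        mul_le_mul_of_nonneg_left (hab n) (by positivity)
      have e2 : δ/(4*C₁) * (C₁ * b n) = δ/4 * b n := by
        field_simp
      nlinarith [hbpos n]
    have lofin : Real.exp c - δ/2 ≤ a n / b n := by
      rw [le_div_iff₀ (hbpos n)]
      have e1 : Real.exp (c - t) * (∫ x in {x | t < |Real.log (h n x / g n x) - c|}, g n x ∂(μ n))
          ≤ Real.exp c * (δ/(4*Real.exp c) * b n) :=
        mul_le_mul hloc dG (Ignn n _) (Real.exp_pos c).le
      have e2 : Real.exp c * (δ/(4*Real.exp c) * b n) = δ/4 * b n := by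
        have : Real.exp c ≠ 0 := (Real.exp_pos c).ne'
        field_simp
      nlinarith [hbpos n]
    rw [Real.dist_eq, abs_lt]
    constructor <;> linarith
  refine ⟨part1, ?_⟩
  -- Part 2: total variation
  intro ε hε
  obtain ⟨r, hr, hball⟩ := Metric.continuousAt_iff.mp
    (Real.continuous_exp.continuousAt (x := 0)) (ε/8) (by linarith)
  set t := r/2 with htdef
  have htpos : 0 < t := by positivity
  have h1 : |Real.exp t - 1| < ε/8 := by
    have hd : dist t (0:ℝ) < r := by
      rw [Real.dist_eq, sub_zero, abs_of_pos htpos]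
      simp only [htdef]; linarith
    simpa [Real.dist_eq, Real.exp_zero] using hball hd
  have h2 : |Real.exp (-t) - 1| < ε/8 := by
    have hd : dist (-t) (0:ℝ) < r := by
      rw [Real.dist_eq, sub_zero, abs_of_neg (by linarith : -t < 0)]
      simp only [htdef]; linarith
    simpa [Real.dist_eq, Real.exp_zero] using hball hd
  have binv : Tendsto (fun n => b n / a n) atTop (nhds ((Real.exp c)⁻¹)) := by
    have := part1.inv₀ (Real.exp_ne_zero c)
    simpa [one_div, inv_div] using this
  have hvalp : Real.exp (c + t) * (Real.exp c)⁻¹ = Real.exp t := by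
    rw [← Real.exp_neg, ← Real.exp_add]; ring_nf
  have hvalm : Real.exp (c - t) * (Real.exp c)⁻¹ = Real.exp (-t) := by
    rw [← Real.exp_neg, ← Real.exp_add]; ring_nf
  have tendKp : Tendsto (fun n => |Real.exp (c + t) * (b n / a n) - 1|) atTop
      (nhds (|Real.exp t - 1|)) := by
    rw [← hvalp]
    exact ((tendsto_const_nhds.mul binv).sub tendsto_const_nhds).abs
  have tendKm : Tendsto (fun n => |Real.exp (c - t) * (b n / a n) - 1|) atTop
      (nhds (|Real.exp (-t) - 1|)) := by
    rw [← hvalm]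
    exact ((tendsto_const_nhds.mul binv).sub tendsto_const_nhds).abs
  have evKp : ∀ᶠ n in atTop, |Real.exp (c + t) * (b n / a n) - 1| < ε/4 :=
    tendKp.eventually_lt_const (by linarith)
  have evKm : ∀ᶠ n in atTop, |Real.exp (c - t) * (b n / a n) - 1| < ε/4 :=
    tendKm.eventually_lt_const (by linarith)
  have evH := Hbad0 t htpos (ε/4) (by linarith)
  have evG : ∀ᶠ n in atTop,
      (∫ x in {x | t < |Real.log (h n x / g n x) - c|}, g n x ∂(μ n)) / b n < ε/4 :=
    (hconv t htpos).eventually_lt_const (by linarith)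
  obtain ⟨N, hN⟩ := eventually_atTop.mp (((evKp.and evKm).and evH).and evG)
  refine ⟨N, fun n hn A hA => ?_⟩
  obtain ⟨⟨⟨bKp, bKm⟩, bH⟩, bG⟩ := hN n hn
  set S := {x | t < |Real.log (h n x / g n x) - c|} with hSdef
  have hsplit_h : (∫ x in A, h n x ∂(μ n))
      = (∫ x in A ∩ Sᶜ, h n x ∂(μ n)) + ∫ x in A \ Sᶜ, h n x ∂(μ n) :=
    (integral_inter_add_diff (Smeas n t).compl (hint n).integrableOn).symm
  have hsplit_g : (∫ x in A, g n x ∂(μ n))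
      = (∫ x in A ∩ Sᶜ, g n x ∂(μ n)) + ∫ x in A \ Sᶜ, g n x ∂(μ n) :=
    (integral_inter_add_diff (Smeas n t).compl (gint n).integrableOn).symm
  have hsubS : A \ Sᶜ ⊆ S := fun x hx => by simpa using hx.2
  have hmemSc : ∀ x ∈ A ∩ Sᶜ, |Real.log (h n x / g n x) - c| ≤ t := by
    intro x hx
    have hx2 : ¬ t < |Real.log (h n x / g n x) - c| := by simpa [hSdef] using hx.2
    exact not_lt.mp hx2
  have t1 : Real.exp (c - t) * (∫ x in A ∩ Sᶜ, g n x ∂(μ n))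
      ≤ ∫ x in A ∩ Sᶜ, h n x ∂(μ n) := by
    rw [← integral_const_mul]
    exact setIntegral_mono_on (((gint n).const_mul _).integrableOn) (hint n).integrableOn
      (hA.inter (Smeas n t).compl) (fun x hx => boundLow n c t x (hmemSc x hx))
  have t2 : (∫ x in A ∩ Sᶜ, h n x ∂(μ n))
      ≤ Real.exp (c + t) * ∫ x in A ∩ Sᶜ, g n x ∂(μ n) := by
    rw [← integral_const_mul]
    exact setIntegral_mono_on (hint n).integrableOn (((gint n).const_mul _).integrableOn)
      (hA.inter (Smeas n t).compl) (fun x hx => boundUp n c t x (hmemSc x hx))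
  have t4 : (∫ x in A \ Sᶜ, h n x ∂(μ n)) ≤ ∫ x in S, h n x ∂(μ n) :=
    setIntegral_mono_set (hint n).integrableOn (Filter.Eventually.of_forall (hnn n))
      (HasSubset.Subset.eventuallyLE hsubS)
  have t6 : (∫ x in A \ Sᶜ, g n x ∂(μ n)) ≤ ∫ x in S, g n x ∂(μ n) :=
    setIntegral_mono_set (gint n).integrableOn (Filter.Eventually.of_forall (gnn n))
      (HasSubset.Subset.eventuallyLE hsubS)
  have t8 : (∫ x in A ∩ Sᶜ, g n x ∂(μ n)) ≤ b n := by
    rw [hb n]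
    exact setIntegral_le_integral (gint n) (Filter.Eventually.of_forall (gnn n))
  rw [hsplit_h, hsplit_g]
  have main := tvArith (hapos n) (hbpos n) t1 t2 (Ihnn n _) t4 (Ignn n _) t6
    (Ignn n _) t8
  refine main.trans ?_
  linarith [bKp, bKm, bH, bG]
end

section
/- With η(x) = a₁/2 + (a₃/6)x + (b₄/24)x² satisfying a₁ > 0, b₄ > 0, a₃² < 3a₁b₄, and l an even nonnegative integer, n^{(l+1)/2} ∫_ℝ x^l exp(−n x² η(x)) dx converges as n → ∞ to √(2π/a₁^{l+1})·E[Z^l], where Z is standard normal. -/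
/-!
Substituting `x = y / √n` turns `n^((l+1)/2) ∫ x^l exp(-n x² η(x)) dx` into
`∫ y^l exp(-y² η(y/√n)) dy`. Since the discriminant condition makes `η ≥ m > 0`, the integrands
are dominated by `|y|^l exp(-m y²)`, so by dominated convergence the integrals tend to
`∫ y^l exp(-a₁ y²/2) dy`; the substitution `z = √a₁ y` identifies this with
`√(2π/a₁^(l+1)) E[Z^l]`.
-/

open MeasureTheory ProbabilityTheory Filter Topology Real

lemma integral_pow_smul_comp_mul_left {E : Type*} [NormedAddCommGroup E] [NormedSpace ℝ E]
    {c : ℝ} (hc : 0 < c) (l : ℕ) (g : ℝ → E) :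
    ∫ x, x ^ l • g (c * x) = (c ^ (l + 1))⁻¹ • ∫ y, y ^ l • g y := by
  have h := Measure.integral_comp_mul_left (fun y => y ^ l • g y) c
  simp only [mul_pow, mul_smul, integral_smul, abs_of_pos (inv_pos.2 hc)] at h
  rw [pow_succ, mul_inv, mul_smul, ← h, inv_smul_smul₀ (pow_ne_zero _ hc.ne')]

lemma rpow_mul_integral_pow_mul_exp_neg_mul_sq_mul {f : ℝ → ℝ} {t : ℝ} (ht : 0 < t)
    (l : ℕ) :
    t ^ (((l : ℝ) + 1) / 2) * ∫ x, x ^ l * exp (-t * x ^ 2 * f x)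
      = ∫ y, y ^ l * exp (-(y ^ 2 * f (y / √t))) := by
  have hs : 0 < √t := sqrt_pos.2 ht
  have hpow : t ^ (((l : ℝ) + 1) / 2) = √t ^ (l + 1) := by
    rw [sqrt_eq_rpow, ← rpow_natCast, ← rpow_mul ht.le]
    push_cast
    ring_nf
  have hexp : ∀ x, -t * x ^ 2 * f x = -((√t * x) ^ 2 * f (√t * x / √t)) := fun x => by
    rw [mul_div_cancel_left₀ _ hs.ne', mul_pow, sq_sqrt ht.le]
    ring
  have h := integral_pow_smul_comp_mul_left hs l fun y => exp (-(y ^ 2 * f (y / √t)))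
  simp only [smul_eq_mul, ← hexp] at h
  rw [hpow, h, ← mul_assoc, mul_inv_cancel₀ (pow_ne_zero _ hs.ne'), one_mul]

theorem tendsto_rpow_mul_integral_pow_mul_exp_neg_mul_sq_mul {f : ℝ → ℝ} {m : ℝ}
    (hm : 0 < m) (hfm : ∀ x, m ≤ f x) (hf : Measurable f) (hf0 : ContinuousAt f 0) (l : ℕ) :
    Tendsto (fun t : ℝ => t ^ (((l : ℝ) + 1) / 2) * ∫ x, x ^ l * exp (-t * x ^ 2 * f x)) atTop
      (𝓝 (∫ y, y ^ l * exp (-(y ^ 2 * f 0)))) := by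
  have hlim : Tendsto (fun t : ℝ => ∫ y, y ^ l * exp (-(y ^ 2 * f (y / √t)))) atTop
      (𝓝 (∫ y, y ^ l * exp (-(y ^ 2 * f 0)))) := by
    refine tendsto_integral_filter_of_dominated_convergence
      (fun y => ‖y ^ l * exp (-m * y ^ 2)‖) (.of_forall fun t => ?_) (.of_forall fun t => ?_)
      ?_ (.of_forall fun y => ?_)
    · exact Measurable.aestronglyMeasurable (by fun_prop)
    · refine .of_forall fun y => ?_
      simp only [norm_mul, norm_pow, norm_eq_abs, abs_exp]
      gcongr
      nlinarith [sq_nonneg y, hfm (y / √t)]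
    · have hl : (-1 : ℝ) < l := by linarith [l.cast_nonneg (α := ℝ)]
      simpa [rpow_natCast] using (integrable_rpow_mul_exp_neg_mul_sq hm hl).norm
    · have hy : Tendsto (fun t => y / √t) atTop (𝓝 0) :=
        tendsto_const_nhds.div_atTop tendsto_sqrt_atTop
      exact tendsto_const_nhds.mul ((continuous_exp.tendsto _).comp
        (tendsto_const_nhds.mul (hf0.tendsto.comp hy)).neg)
  refine hlim.congr' ?_
  filter_upwards [eventually_gt_atTop 0] with t ht
  exact (rpow_mul_integral_pow_mul_exp_neg_mul_sq_mul ht l).symm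

lemma sub_sq_div_le_quadratic {a b c : ℝ} (ha : 0 < a) (x : ℝ) :
    c - b ^ 2 / (4 * a) ≤ a * x ^ 2 + b * x + c := by
  have hsq : 0 ≤ (2 * a * x + b) ^ 2 / (4 * a) := by positivity
  have hcomplete : (2 * a * x + b) ^ 2 / (4 * a) = a * x ^ 2 + b * x + b ^ 2 / (4 * a) := by
    field_simp
    ring
  linarith

lemma integral_pow_mul_exp_neg_sq_mul_half_eq_integral_gaussianReal {a : ℝ} (ha : 0 < a)
    (l : ℕ) :
    ∫ y, y ^ l * exp (-(y ^ 2 * (a / 2))) =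
      √(2 * π / a ^ (l + 1)) * ∫ z, z ^ l ∂gaussianReal 0 1 := by
  have hs : 0 < √a := sqrt_pos.2 ha
  have hsqrt : √(a ^ (l + 1)) = √a ^ (l + 1) := by
    rw [← sqrt_sq (pow_nonneg hs.le (l + 1)), pow_right_comm, sq_sqrt ha.le]
  calc ∫ y, y ^ l * exp (-(y ^ 2 * (a / 2)))
      = ∫ y, y ^ l * exp (-((√a * y) ^ 2 / 2)) := by
        congr! 5 with y
        rw [mul_pow, sq_sqrt ha.le]
        ring
    _ = (√a ^ (l + 1))⁻¹ * ∫ z, z ^ l * exp (-(z ^ 2 / 2)) := by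
        simpa only [smul_eq_mul] using
          integral_pow_smul_comp_mul_left hs l fun z => exp (-(z ^ 2 / 2))
    _ = √(2 * π / a ^ (l + 1)) * ∫ z, (√(2 * π))⁻¹ * (z ^ l * exp (-(z ^ 2 / 2))) := by
        rw [integral_const_mul, sqrt_div (by positivity), hsqrt]
        field_simp
    _ = √(2 * π / a ^ (l + 1)) * ∫ z, z ^ l ∂gaussianReal 0 1 := by
        rw [integral_gaussianReal_eq_integral_smul one_ne_zero]
        congr! 3 with z
        simp only [gaussianPDFReal, NNReal.coe_one, mul_one, sub_zero, neg_div, smul_eq_mul]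
        ring

theorem laplace_even_moment_general (a₁ a₃ b₄ : ℝ) (ha₁ : 0 < a₁) (hb₄ : 0 < b₄)
    (hdisc : a₃^2 < 3 * a₁ * b₄) (l : ℕ) :
    Filter.Tendsto
      (fun n : ℕ => (n : ℝ)^(((l : ℝ) + 1) / 2) *
        ∫ x : ℝ, x^l * Real.exp (-(n : ℝ) * x^2 * (a₁ / 2 + a₃ * x / 6 + b₄ * x^2 / 24)))
      Filter.atTop
      (nhds (Real.sqrt (2 * Real.pi / a₁^(l+1)) * ∫ z : ℝ, z^l ∂(gaussianReal 0 1))) := by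
  obtain ⟨m, hm, hη⟩ : ∃ m > 0, ∀ x, m ≤ a₁ / 2 + a₃ * x / 6 + b₄ * x ^ 2 / 24 := by
    refine ⟨a₁ / 2 - (a₃ / 6) ^ 2 / (4 * (b₄ / 24)), ?_, fun x => ?_⟩
    · rw [gt_iff_lt, sub_pos, div_lt_iff₀ (by positivity)]
      nlinarith
    · have hb : 0 < b₄ / 24 := by positivity
      linarith [sub_sq_div_le_quadratic (b := a₃ / 6) (c := a₁ / 2) hb x]
  have h := (tendsto_rpow_mul_integral_pow_mul_exp_neg_mul_sq_mul hm hη (by fun_prop)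
    (by fun_prop) l).comp tendsto_natCast_atTop_atTop
  simpa [Function.comp_def, integral_pow_mul_exp_neg_sq_mul_half_eq_integral_gaussianReal ha₁]
    using h

theorem laplace_even_moment (a₁ a₃ b₄ : ℝ) (ha₁ : 0 < a₁) (hb₄ : 0 < b₄)
    (hdisc : a₃^2 < 3 * a₁ * b₄) (l : ℕ) (hl : Even l) :
    Filter.Tendsto
      (fun n : ℕ => (n : ℝ)^(((l : ℝ) + 1) / 2) *
        ∫ x : ℝ, x^l * Real.exp (-(n : ℝ) * x^2 * (a₁ / 2 + a₃ * x / 6 + b₄ * x^2 / 24)))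
      Filter.atTop
      (nhds (Real.sqrt (2 * Real.pi / a₁^(l+1)) * ∫ z : ℝ, z^l ∂(gaussianReal 0 1))) :=
  laplace_even_moment_general a₁ a₃ b₄ ha₁ hb₄ hdisc l
end

section
/- With η(x) = a₁/2 + (a₃/6)x + (b₄/24)x² satisfying a₁ > 0, b₄ > 0, a₃² < 3a₁b₄, and l an odd nonnegative integer, n^{(l+2)/2} ∫_ℝ x^l exp(−n x² η(x)) dx converges as n → ∞ to −(a₃/6)·√(2π/a₁^{l+4})·E[Z^{l+3}], where Z is standard normal. -/
/-!
Substituting `x = y / √n` turns the quantity into `√n ∫ y^l exp(-y² η(y/√n)) dy`. As `l` is odd,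
only the odd part of `y ↦ exp(-y² η(y/√n))` contributes, which turns the integrand into the
symmetric difference quotient `y^l (w(t,y) - w(-t,y)) / (2t)` at `t = 1/√n`, where
`w(t,y) = exp(-y² η(ty))`. Pointwise it tends to `y^l ∂ₜw(0,y) = -(a₃/6) y^(l+3) exp(-a₁y²/2)`.
Since `a₃² < 3a₁b₄`, `η` is bounded below by some `m > 0`, so the mean value theorem dominates the
difference quotients by a multiple of `|y|^(l+3) exp(-m y²)` and dominated convergence applies.
The limit is a Gaussian moment after rescaling by `√a₁`.
-/

open MeasureTheory ProbabilityTheory Real Filter Topology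

lemma abs_exp_neg_sub_exp_neg_le {c u v : ℝ} (hu : c ≤ u) (hv : c ≤ v) :
    |exp (-u) - exp (-v)| ≤ exp (-c) * |u - v| := by
  simpa only [Real.norm_eq_abs] using
    (convex_Ici c).norm_image_sub_le_of_norm_hasDerivWithin_le
      (fun x _ ↦ ((hasDerivAt_neg x).exp).hasDerivWithinAt)
      (fun x (hx : c ≤ x) ↦ by simpa using exp_le_exp.2 (neg_le_neg hx)) hv hu

lemma integrable_abs_pow_mul_exp_neg_mul_sq {b : ℝ} (hb : 0 < b) (k : ℕ) :
    Integrable fun x : ℝ ↦ |x| ^ k * exp (-b * x ^ 2) := by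
  have hk : (-1 : ℝ) < k := by linarith [k.cast_nonneg (α := ℝ)]
  refine (integrable_rpow_mul_exp_neg_mul_sq hb hk).abs.congr (.of_forall fun x ↦ ?_)
  simp [abs_mul]

lemma HasDerivAt.tendsto_symmetric_slope {f : ℝ → ℝ} {f' x : ℝ} (hf : HasDerivAt f f' x) :
    Tendsto (fun t ↦ (f (x + t) - f (x - t)) / (2 * t)) (𝓝[≠] 0) (𝓝 f') := by
  have hright := hasDerivAt_iff_tendsto_slope_zero.1 hf
  have hleft := hright.comp <|
    (continuous_neg.tendsto' 0 0 neg_zero).inf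
      (tendsto_principal_principal.2 fun _ ↦ neg_ne_zero.2)
  have := (hright.add hleft).div_const 2
  rw [add_self_div_two] at this
  refine this.congr fun t ↦ ?_
  simp only [Function.comp_apply, smul_eq_mul, inv_neg, ← sub_eq_add_neg]
  ring

lemma integral_odd_pow_mul_eq_integral_odd_part {l : ℕ} (hl : Odd l) {f : ℝ → ℝ}
    (hf : Integrable fun x ↦ x ^ l * f x) :
    ∫ x, x ^ l * f x = ∫ x, x ^ l * ((f x - f (-x)) / 2) := by
  have hneg : ∫ x, x ^ l * f (-x) = -∫ x, x ^ l * f x := by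
    rw [← integral_neg, ← integral_neg_eq_self]
    simp [hl.neg_pow]
  have hf' : Integrable fun x ↦ x ^ l * f (-x) := by
    simpa [hl.neg_pow] using hf.comp_neg.neg
  simp_rw [mul_div_assoc', mul_sub, sub_div]
  rw [integral_sub (hf.div_const 2) (hf'.div_const 2), integral_div, integral_div, hneg]
  ring

lemma integral_pow_mul_exp_neg_mul_sq_eq_gaussian_moment {a : ℝ} (ha : 0 < a) (k : ℕ) :
    ∫ x, x ^ k * exp (-(a / 2) * x ^ 2)
      = √(2 * π / a ^ (k + 1)) * ∫ z, z ^ k ∂gaussianReal 0 1 := by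
  have hsa : 0 < √a := sqrt_pos.2 ha
  have hmoment : ∫ z, z ^ k ∂gaussianReal 0 1
      = (√(2 * π))⁻¹ * ∫ z, z ^ k * exp (-(1 / 2) * z ^ 2) := by
    rw [integral_gaussianReal_eq_integral_smul one_ne_zero, ← integral_const_mul]
    congr 1 with z
    simp only [gaussianPDFReal, smul_eq_mul, NNReal.coe_one, mul_one, sub_zero]
    ring_nf
  have hscale := Measure.integral_comp_mul_left (fun z ↦ z ^ k * exp (-(1 / 2) * z ^ 2)) √a
  have hpt : ∀ x, (√a * x) ^ k * exp (-(1 / 2) * (√a * x) ^ 2)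
      = √a ^ k * (x ^ k * exp (-(a / 2) * x ^ 2)) := fun x ↦ by
    rw [mul_pow, mul_pow, sq_sqrt ha.le]; ring_nf
  simp only [hpt, integral_const_mul, abs_inv, abs_of_pos hsa, smul_eq_mul] at hscale
  have hpow : √(a ^ (k + 1)) = √a ^ (k + 1) := by
    rw [← sqrt_sq (pow_nonneg (sqrt_nonneg a) (k + 1)), ← pow_right_comm, sq_sqrt ha.le]
  rw [hmoment, sqrt_div' _ (by positivity), hpow,
    ← (eq_inv_mul_iff_mul_eq₀ hsa.ne').1 hscale]
  field_simp
  ring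

noncomputable def eta (a₁ a₃ b₄ x : ℝ) : ℝ := a₁ / 2 + a₃ * x / 6 + b₄ * x ^ 2 / 24

-- The integrand `exp (-n x² η x)` in the variable `y = √n x`, with `t = 1 / √n`.
noncomputable def etaWeight (a₁ a₃ b₄ t y : ℝ) : ℝ := exp (-(y ^ 2 * eta a₁ a₃ b₄ (t * y)))

section

variable {a₁ a₃ b₄ : ℝ}

lemma exists_pos_le_eta (hb₄ : 0 < b₄) (hdisc : a₃ ^ 2 < 3 * a₁ * b₄) :
    ∃ m > 0, ∀ x, m ≤ eta a₁ a₃ b₄ x := by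
  refine ⟨(3 * a₁ * b₄ - a₃ ^ 2) / (6 * b₄), div_pos (by linarith) (by linarith), fun x ↦ ?_⟩
  rw [div_le_iff₀ (by linarith), eta]
  nlinarith [sq_nonneg (b₄ * x + 2 * a₃)]

lemma continuous_etaWeight (t : ℝ) : Continuous (etaWeight a₁ a₃ b₄ t) := by
  unfold etaWeight eta; fun_prop

lemma etaWeight_le {m : ℝ} (hm : ∀ x, m ≤ eta a₁ a₃ b₄ x) (t y : ℝ) :
    etaWeight a₁ a₃ b₄ t y ≤ exp (-m * y ^ 2) :=
  exp_le_exp.2 (by nlinarith [hm (t * y), sq_nonneg y])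

lemma integrable_pow_mul_etaWeight {m : ℝ} (hm0 : 0 < m) (hm : ∀ x, m ≤ eta a₁ a₃ b₄ x)
    (k : ℕ) (t : ℝ) : Integrable fun y ↦ y ^ k * etaWeight a₁ a₃ b₄ t y := by
  refine (integrable_abs_pow_mul_exp_neg_mul_sq hm0 k).mono'
    ((continuous_pow k).mul (continuous_etaWeight t)).aestronglyMeasurable (.of_forall fun y ↦ ?_)
  rw [norm_mul, norm_pow, Real.norm_eq_abs, etaWeight, Real.norm_of_nonneg (exp_pos _).le]
  exact mul_le_mul_of_nonneg_left (etaWeight_le hm t y) (by positivity)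

lemma abs_etaWeight_sub_etaWeight_neg_le {m : ℝ} (hm : ∀ x, m ≤ eta a₁ a₃ b₄ x) (t y : ℝ) :
    |etaWeight a₁ a₃ b₄ t y - etaWeight a₁ a₃ b₄ (-t) y|
      ≤ exp (-m * y ^ 2) * |a₃ * t * y ^ 3 / 3| := by
  have hbound : ∀ s, m * y ^ 2 ≤ y ^ 2 * eta a₁ a₃ b₄ (s * y) := fun s ↦ by
    nlinarith [hm (s * y), sq_nonneg y]
  have hdiff : y ^ 2 * eta a₁ a₃ b₄ (t * y) - y ^ 2 * eta a₁ a₃ b₄ (-t * y)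
      = a₃ * t * y ^ 3 / 3 := by
    simp only [eta]; ring
  rw [neg_mul, ← hdiff]
  exact abs_exp_neg_sub_exp_neg_le (hbound t) (hbound (-t))

lemma hasDerivAt_etaWeight_zero (y : ℝ) :
    HasDerivAt (fun t ↦ etaWeight a₁ a₃ b₄ t y)
      (-(a₃ / 6) * (y ^ 3 * exp (-(a₁ / 2) * y ^ 2))) 0 := by
  have hty := (hasDerivAt_id (0 : ℝ)).mul_const y
  have heta := ((((hty.const_mul a₃).div_const 6).const_add (a₁ / 2)).add
    ((hty.pow 2).const_mul b₄ |>.div_const 24)).const_mul (y ^ 2) |>.neg |>.exp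
  refine heta.congr_deriv ?_
  simp only [id, Pi.neg_apply, Pi.add_apply, Pi.pow_apply, zero_mul]; ring_nf

lemma tendsto_integral_symmetric_slope_etaWeight (hb₄ : 0 < b₄) (hdisc : a₃ ^ 2 < 3 * a₁ * b₄)
    (l : ℕ) :
    Tendsto
      (fun t ↦ ∫ y, y ^ l * ((etaWeight a₁ a₃ b₄ t y - etaWeight a₁ a₃ b₄ (-t) y) / (2 * t)))
      (𝓝[≠] 0) (𝓝 (-(a₃ / 6) * ∫ y, y ^ (l + 3) * exp (-(a₁ / 2) * y ^ 2))) := by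
  obtain ⟨m, hm0, hm⟩ := exists_pos_le_eta hb₄ hdisc
  have hlim : ∀ y, Tendsto
      (fun t ↦ y ^ l * ((etaWeight a₁ a₃ b₄ t y - etaWeight a₁ a₃ b₄ (-t) y) / (2 * t)))
      (𝓝[≠] 0) (𝓝 (-(a₃ / 6) * (y ^ (l + 3) * exp (-(a₁ / 2) * y ^ 2)))) := fun y ↦ by
    have := ((hasDerivAt_etaWeight_zero (a₁ := a₁) (a₃ := a₃) (b₄ := b₄) y)
      |>.tendsto_symmetric_slope).const_mul (y ^ l)
    simp only [zero_add, zero_sub] at this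
    convert this using 2
    ring
  rw [← integral_const_mul]
  refine tendsto_integral_filter_of_dominated_convergence
    (fun y ↦ |a₃| / 6 * (|y| ^ (l + 3) * exp (-m * y ^ 2))) ?_ ?_
    ((integrable_abs_pow_mul_exp_neg_mul_sq hm0 (l + 3)).const_mul _) (.of_forall hlim)
  · exact .of_forall fun t ↦ ((continuous_pow l).mul (((continuous_etaWeight t).sub
      (continuous_etaWeight (-t))).div_const _)).aestronglyMeasurable
  · filter_upwards [self_mem_nhdsWithin] with t (ht : t ≠ 0)
    refine .of_forall fun y ↦ ?_
    rw [norm_mul, norm_div, Real.norm_eq_abs, Real.norm_eq_abs, Real.norm_eq_abs, abs_pow]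
    calc |y| ^ l * (|etaWeight a₁ a₃ b₄ t y - etaWeight a₁ a₃ b₄ (-t) y| / |2 * t|)
        ≤ |y| ^ l * (exp (-m * y ^ 2) * |a₃ * t * y ^ 3 / 3| / |2 * t|) := by
          gcongr; exact abs_etaWeight_sub_etaWeight_neg_le hm t y
      _ = |a₃| / 6 * (|y| ^ (l + 3) * exp (-m * y ^ 2)) := by
          rw [abs_div, abs_mul, abs_mul, abs_mul, abs_pow, abs_two,
            abs_of_pos (by norm_num : (0 : ℝ) < 3)]
          field_simp
          ring

lemma rpow_mul_integral_eq_integral_symmetric_slope (hb₄ : 0 < b₄) (hdisc : a₃ ^ 2 < 3 * a₁ * b₄)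
    {l : ℕ} (hl : Odd l) {n : ℝ} (hn : 0 < n) :
    n ^ (((l : ℝ) + 2) / 2) * ∫ x, x ^ l * exp (-n * x ^ 2 * eta a₁ a₃ b₄ x)
      = ∫ y, y ^ l *
          ((etaWeight a₁ a₃ b₄ (√n)⁻¹ y - etaWeight a₁ a₃ b₄ (-(√n)⁻¹) y) / (2 * (√n)⁻¹)) := by
  obtain ⟨m, hm0, hm⟩ := exists_pos_le_eta hb₄ hdisc
  have hs : 0 < √n := sqrt_pos.2 hn
  have hsubst : ∫ x, x ^ l * exp (-n * x ^ 2 * eta a₁ a₃ b₄ x)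
      = ((√n) ^ (l + 1))⁻¹ * ∫ y, y ^ l * etaWeight a₁ a₃ b₄ (√n)⁻¹ y := by
    have h := Measure.integral_comp_mul_left
      (fun x ↦ x ^ l * exp (-n * x ^ 2 * eta a₁ a₃ b₄ x)) (√n)⁻¹
    have hpt : ∀ y,
        ((√n)⁻¹ * y) ^ l * exp (-n * ((√n)⁻¹ * y) ^ 2 * eta a₁ a₃ b₄ ((√n)⁻¹ * y))
        = ((√n) ^ l)⁻¹ * (y ^ l * etaWeight a₁ a₃ b₄ (√n)⁻¹ y) := fun y ↦ by
      rw [etaWeight, mul_pow, mul_pow, inv_pow, inv_pow, sq_sqrt hn.le]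
      field_simp
    simp only [hpt, integral_const_mul, inv_inv, abs_of_pos hs, smul_eq_mul] at h
    rw [pow_succ, mul_inv, mul_right_comm, h]
    field_simp
  have hflip : ∀ y, etaWeight a₁ a₃ b₄ (√n)⁻¹ (-y) = etaWeight a₁ a₃ b₄ (-(√n)⁻¹) y :=
    fun y ↦ by simp only [etaWeight, neg_sq, mul_neg, neg_mul]
  have hpow : n ^ (((l : ℝ) + 2) / 2) = √n ^ (l + 2) := by
    rw [sqrt_eq_rpow, ← rpow_natCast, ← rpow_mul hn.le]; push_cast; ring_nf
  rw [hsubst, hpow, integral_odd_pow_mul_eq_integral_odd_part hl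
    (integrable_pow_mul_etaWeight hm0 hm l _)]
  simp only [hflip]
  rw [← mul_assoc, ← integral_const_mul]
  congr 1 with y
  field_simp
  ring

end

theorem laplace_odd_moment (a₁ a₃ b₄ : ℝ) (ha₁ : 0 < a₁) (hb₄ : 0 < b₄)
    (hdisc : a₃^2 < 3 * a₁ * b₄) (l : ℕ) (hl : Odd l) :
    Filter.Tendsto
      (fun n : ℕ => (n : ℝ)^(((l : ℝ) + 2) / 2) *
        ∫ x : ℝ, x^l * Real.exp (-(n : ℝ) * x^2 * (a₁ / 2 + a₃ * x / 6 + b₄ * x^2 / 24)))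
      Filter.atTop
      (nhds (-(a₃ / 6) * Real.sqrt (2 * Real.pi / a₁^(l+4)) *
        ∫ z : ℝ, z^(l+3) ∂(gaussianReal 0 1))) := by
  have hinv : Tendsto (fun n : ℕ ↦ (√(n : ℝ))⁻¹) atTop (𝓝[≠] 0) :=
    (tendsto_inv_atTop_nhdsGT_zero.comp
      (tendsto_sqrt_atTop.comp tendsto_natCast_atTop_atTop)).mono_right (nhdsGT_le_nhdsNE 0)
  have hlim := (tendsto_integral_symmetric_slope_etaWeight hb₄ hdisc l).comp hinv
  rw [integral_pow_mul_exp_neg_mul_sq_eq_gaussian_moment ha₁, ← mul_assoc] at hlim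
  refine hlim.congr' ?_
  filter_upwards [eventually_gt_atTop 0] with n hn
  exact (rpow_mul_integral_eq_integral_symmetric_slope hb₄ hdisc hl (Nat.cast_pos.2 hn)).symm
end

section
/- Let q(t) := (θ₂/4)t² − log cosh(θ₂t) with θ₂ > 1/2, and let m > 0 be the unique positive root of m = tanh(2θ₂m). Then q attains its global minimum on (0,∞) uniquely at t = 2m, with q''(2m) > 0, and q(−t) = q(t) so the global minimum on (−∞,0) is at t = −2m. -/
/-!
With `g(x) = tanh x - x / (2θ₂)` one has `q'(t) = -θ₂ g(θ₂ t)`. Since `tanh` is strictly concave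
on `[0, ∞)`, so is `g`; it vanishes at `0` and at `2θ₂m`, hence is positive in between and negative
beyond. So `q` strictly decreases on `(0, 2m]` and strictly increases on `[2m, ∞)`. Strict
concavity also puts `g'(2θ₂m)` below the secant slope `0`, and `q''(2m) = -θ₂² g'(2θ₂m) > 0`.
-/

open Real Set

namespace Real

theorem hasDerivAt_tanh_s15 (x : ℝ) : HasDerivAt tanh (1 - tanh x ^ 2) x := by
  have h : HasDerivAt (fun y => sinh y / cosh y)
      ((cosh x * cosh x - sinh x * sinh x) / cosh x ^ 2) x :=
    (hasDerivAt_sinh x).div (hasDerivAt_cosh x) (cosh_pos x).ne'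
  rw [show (fun y => sinh y / cosh y) = tanh from funext fun y => (tanh_eq_sinh_div_cosh y).symm]
    at h
  refine h.congr_deriv ?_
  rw [tanh_eq_sinh_div_cosh, div_pow, one_sub_div (pow_pos (cosh_pos x) 2).ne']
  ring

theorem deriv_tanh : deriv tanh = fun x => 1 - tanh x ^ 2 :=
  funext fun x => (hasDerivAt_tanh_s15 x).deriv

theorem continuous_tanh : Continuous tanh :=
  continuous_iff_continuousAt.2 fun x => (hasDerivAt_tanh_s15 x).continuousAt

theorem strictMono_tanh : StrictMono tanh :=
  strictMono_of_deriv_pos fun x => by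
    rw [deriv_tanh]
    linarith [tanh_sq_lt_one x]

theorem tanh_nonneg {x : ℝ} (hx : 0 ≤ x) : 0 ≤ tanh x :=
  tanh_zero ▸ strictMono_tanh.monotone hx

theorem strictConcaveOn_tanh : StrictConcaveOn ℝ (Ici 0) tanh := by
  refine StrictAntiOn.strictConcaveOn_of_deriv (convex_Ici 0) continuous_tanh.continuousOn ?_
  rw [interior_Ici, deriv_tanh]
  intro x hx y _ hxy
  have h_lt := strictMono_tanh hxy
  have h_nonneg := tanh_nonneg hx.out.le
  dsimp only
  nlinarith

theorem hasDerivAt_log_cosh (x : ℝ) : HasDerivAt (fun y => log (cosh y)) (tanh x) x := by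
  simpa [tanh_eq_sinh_div_cosh] using (hasDerivAt_cosh x).log (cosh_pos x).ne'

end Real

namespace StrictConcaveOn

variable {s : Set ℝ} {f : ℝ → ℝ} {a b x : ℝ}

theorem lt_apply_of_mem_Ioo (hf : StrictConcaveOn ℝ s f) (ha : a ∈ s) (hb : b ∈ s)
    (hfab : f a = f b) (hx : x ∈ Ioo a b) : f b < f x := by
  have hab := hx.1.trans hx.2
  have := hf.lt_on_openSegment ha hb hab.ne (by rwa [openSegment_eq_Ioo hab])
  rwa [hfab, min_self] at this

theorem apply_lt_of_lt_of_lt (hf : StrictConcaveOn ℝ s f) (ha : a ∈ s) (hx : x ∈ s)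
    (hab : a < b) (hbx : b < x) (hfab : f a = f b) : f x < f b := by
  have hax := hab.trans hbx
  have := hf.lt_on_openSegment ha hx hax.ne (by rw [openSegment_eq_Ioo hax]; exact ⟨hab, hbx⟩)
  rw [hfab] at this
  exact (min_lt_iff.1 this).resolve_left (lt_irrefl _)

end StrictConcaveOn

theorem lt_apply_of_hasDerivAt_neg_of_pos {f f' : ℝ → ℝ} {a c t : ℝ} (hac : a < c)
    (hf : ∀ x ∈ Ioi a, HasDerivAt f (f' x) x) (hneg : ∀ x ∈ Ioo a c, f' x < 0)
    (hpos : ∀ x ∈ Ioi c, 0 < f' x) (ht : a < t) (htc : t ≠ c) : f c < f t := by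
  have hcont : ∀ u v, a < u → ContinuousOn f (Icc u v) := fun u v hu x hx =>
    (hf x (hu.trans_le hx.1)).continuousAt.continuousWithinAt
  rcases htc.lt_or_gt with htc | hct
  · refine strictAntiOn_of_deriv_neg (convex_Icc t c) (hcont t c ht) (fun x hx => ?_)
      (left_mem_Icc.2 htc.le) (right_mem_Icc.2 htc.le) htc
    rw [interior_Icc] at hx
    rw [(hf x (ht.trans hx.1)).deriv]
    exact hneg x ⟨ht.trans hx.1, hx.2⟩
  · refine strictMonoOn_of_deriv_pos (convex_Icc c t) (hcont c t hac) (fun x hx => ?_)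
      (left_mem_Icc.2 hct.le) (right_mem_Icc.2 hct.le) hct
    rw [interior_Icc] at hx
    rw [(hf x (hac.trans hx.1)).deriv]
    exact hpos x hx.1

/-- The function `g` of the sketch above: for `θ ≠ 0`, `x` is a zero iff `x / (2θ)` solves
`m = tanh (2θm)`. -/
noncomputable def selfConsistencyGap (θ x : ℝ) : ℝ := tanh x - (2 * θ)⁻¹ * x

section selfConsistencyGap

variable {θ : ℝ}

theorem selfConsistencyGap_zero : selfConsistencyGap θ 0 = 0 := by
  simp [selfConsistencyGap]

theorem selfConsistencyGap_eq_zero {m : ℝ} (hθ : θ ≠ 0) (hroot : m = tanh (2 * θ * m)) :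
    selfConsistencyGap θ (θ * (2 * m)) = 0 := by
  rw [selfConsistencyGap, show θ * (2 * m) = 2 * θ * m by ring, ← hroot]
  field_simp
  ring

theorem hasDerivAt_selfConsistencyGap (x : ℝ) :
    HasDerivAt (selfConsistencyGap θ) (1 - tanh x ^ 2 - (2 * θ)⁻¹) x :=
  ((hasDerivAt_tanh_s15 x).sub ((hasDerivAt_id x).const_mul _)).congr_deriv (by ring)

theorem strictConcaveOn_selfConsistencyGap (hθ : 0 ≤ θ) :
    StrictConcaveOn ℝ (Ici 0) (selfConsistencyGap θ) :=
  strictConcaveOn_tanh.sub_convexOn ((convexOn_id (convex_Ici 0)).smul (by positivity))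

theorem hasDerivAt_sq_sub_log_cosh (hθ : θ ≠ 0) (t : ℝ) :
    HasDerivAt (fun t : ℝ => θ / 4 * t ^ 2 - log (cosh (θ * t)))
      (-θ * selfConsistencyGap θ (θ * t)) t := by
  refine (((hasDerivAt_pow 2 t).const_mul (θ / 4)).sub
    ((hasDerivAt_log_cosh (θ * t)).comp t ((hasDerivAt_id t).const_mul θ))).congr_deriv ?_
  rw [selfConsistencyGap]
  field_simp
  ring

end selfConsistencyGap

theorem q_min_supercritical_general (θ₂ m : ℝ) (h : 1/2 < θ₂)
    (hm : m ∈ Set.Ioo (0:ℝ) 1) (hroot : m = Real.tanh (2 * θ₂ * m)) :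
    (∀ t : ℝ, 0 < t → t ≠ 2 * m →
      θ₂ / 4 * (2*m)^2 - Real.log (Real.cosh (θ₂ * (2*m))) <
        θ₂ / 4 * t^2 - Real.log (Real.cosh (θ₂ * t))) ∧
    0 < deriv (deriv (fun t : ℝ => θ₂ / 4 * t^2 - Real.log (Real.cosh (θ₂ * t)))) (2*m) ∧
    (∀ t : ℝ, θ₂ / 4 * (-t)^2 - Real.log (Real.cosh (θ₂ * (-t))) =
        θ₂ / 4 * t^2 - Real.log (Real.cosh (θ₂ * t))) := by
  have hθ : 0 < θ₂ := by linarith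
  have hm₀ : 0 < m := hm.1
  have hx₀ : 0 < θ₂ * (2 * m) := by positivity
  have hconc := strictConcaveOn_selfConsistencyGap hθ.le
  have hroots : selfConsistencyGap θ₂ 0 = selfConsistencyGap θ₂ (θ₂ * (2 * m)) := by
    rw [selfConsistencyGap_zero, selfConsistencyGap_eq_zero hθ.ne' hroot]
  refine ⟨fun t ht htm => ?_, ?_, fun t => by simp⟩
  · refine lt_apply_of_hasDerivAt_neg_of_pos (by positivity)
      (fun x _ => hasDerivAt_sq_sub_log_cosh hθ.ne' x)
      (fun x hx => ?_) (fun x hx => ?_) ht htm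
    · have hg := hconc.lt_apply_of_mem_Ioo self_mem_Ici hx₀.le hroots
        ⟨mul_pos hθ hx.1, mul_lt_mul_of_pos_left hx.2 hθ⟩
      rw [← hroots, selfConsistencyGap_zero] at hg
      exact mul_neg_of_neg_of_pos (neg_lt_zero.2 hθ) hg
    · have hx' : 0 ≤ θ₂ * x := (mul_pos hθ (by linarith [mem_Ioi.1 hx])).le
      have hg := hconc.apply_lt_of_lt_of_lt self_mem_Ici hx' hx₀
        (mul_lt_mul_of_pos_left hx hθ) hroots
      rw [← hroots, selfConsistencyGap_zero] at hg
      exact mul_pos_of_neg_of_neg (neg_lt_zero.2 hθ) hg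
  · have hslope := hconc.lt_slope_of_hasDerivAt self_mem_Ici hx₀.le hx₀
      (hasDerivAt_selfConsistencyGap _)
    rw [slope_def_field, ← hroots, sub_self, zero_div] at hslope
    have hq' : HasDerivAt (fun t => -θ₂ * selfConsistencyGap θ₂ (θ₂ * t)) _ (2 * m) :=
      ((hasDerivAt_selfConsistencyGap _).comp (2 * m)
        ((hasDerivAt_id' (2 * m)).const_mul θ₂)).const_mul (-θ₂)
    rw [show deriv _ = _ from funext (hasDerivAt_sq_sub_log_cosh hθ.ne' · |>.deriv), hq'.deriv]
    nlinarith [mul_pos (mul_pos hθ hθ) (neg_pos.2 hslope)]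

theorem q_min_supercritical (θ₂ m : ℝ) (h : 1/2 < θ₂)
    (hm : m ∈ Set.Ioo (0:ℝ) 1) (hroot : m = Real.tanh (2 * θ₂ * m))
    (huniq : ∀ m' ∈ Set.Ioo (0:ℝ) 1, m' = Real.tanh (2 * θ₂ * m') → m' = m) :
    (∀ t : ℝ, 0 < t → t ≠ 2 * m →
      θ₂ / 4 * (2*m)^2 - Real.log (Real.cosh (θ₂ * (2*m))) <
        θ₂ / 4 * t^2 - Real.log (Real.cosh (θ₂ * t))) ∧
    0 < deriv (deriv (fun t : ℝ => θ₂ / 4 * t^2 - Real.log (Real.cosh (θ₂ * t)))) (2*m) ∧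
    (∀ t : ℝ, θ₂ / 4 * (-t)^2 - Real.log (Real.cosh (θ₂ * (-t))) =
        θ₂ / 4 * t^2 - Real.log (Real.cosh (θ₂ * t))) :=
  q_min_supercritical_general θ₂ m h hm hroot
end
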